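/- arXiv:1812.00222 — 4 statements merged into one kernel-verified Lean document; each statement's English description precedes it below -/
import Mathlib

section
/- If $G$ is a finite $p$-group of order $p^k$ and $A$ is a maximal abelian normal subgroup of $G$ with $|A| = p^s$, then $k \leq s(s+1)/2$. -/
/-!
A maximal abelian normal subgroup `A` of a `p`-group `G` is self-centralizing: otherwise
`C_G(A) / A` is a nontrivial normal subgroup of `G / A`, so it contains a central element `xA ≠ 1`,
and `⟨A, x⟩` is a larger abelian normal subgroup. Hence `|G| = |G : C_G(A)| · p ^ s`, and it
remains to show `|G : C_G(A)| ≤ p ^ (s choose 2)` for every normal subgroup `A` of order `p ^ s`.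
By induction on `s`: write `A = ⟨M, x⟩` with `M` normal of order `p ^ t`, `t < s`, and `x` central
modulo `M`. Then `g ↦ [g, x]` maps `C_G(M)` into `M`, and its fibres are the cosets of
`C_G(A) = C_G(M) ∩ C_G(x)`, so `|C_G(M) : C_G(A)| ≤ p ^ t`.
-/

open Subgroup

theorem Nat.add_choose_two (n : ℕ) : n + n.choose 2 = (n + 1).choose 2 := by
  rw [Nat.choose_succ_succ', Nat.choose_one_right]

namespace Subgroup

variable {G : Type*} [Group G]

theorem normal_of_le_center {H : Subgroup G} (h : H ≤ center G) : H.Normal where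
  conj_mem n hn g := by rw [mem_center_iff.mp (h hn) g, mul_inv_cancel_right]; exact hn

theorem normal_sup_zpowers_of_mk_mem_center {M : Subgroup G} [M.Normal] {x : G}
    (hx : (x : G ⧸ M) ∈ center (G ⧸ M)) : (M ⊔ zpowers x).Normal := by
  have : (zpowers (x : G ⧸ M)).Normal := normal_of_le_center (zpowers_le.mpr hx)
  have h : M ⊔ zpowers x = (zpowers (x : G ⧸ M)).comap (QuotientGroup.mk' M) := by
    rw [← QuotientGroup.mk'_apply, ← MonoidHom.map_zpowers, comap_map_eq, QuotientGroup.ker_mk',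
      sup_comm]
  rw [h]
  infer_instance

theorem centralizer_sup_zpowers (M : Subgroup G) (x : G) :
    centralizer ((M ⊔ zpowers x : Subgroup G) : Set G) = centralizer {x} ⊓ centralizer M := by
  conv_lhs =>
    rw [zpowers_eq_closure, ← closure_eq M, ← Subgroup.closure_union, centralizer_closure]
  ext g
  simp [mem_centralizer_iff, or_imp, forall_and]

theorem relIndex_centralizer_singleton_le_card {K M : Subgroup G} [Finite M] {x : G}
    (h : ∀ g ∈ K, g * x * g⁻¹ * x⁻¹ ∈ M) : (centralizer {x}).relIndex K ≤ Nat.card M := by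
  let comm : K → M := fun g => ⟨g * x * g⁻¹ * x⁻¹, h g g.2⟩
  have hcomm (a b : K) : comm a = comm b ↔ ((a⁻¹ * b : K) : G) ∈ centralizer {x} := by
    simp only [comm, Subtype.ext_iff, mul_left_inj, coe_mul, coe_inv]
    rw [mem_centralizer_singleton_iff]
    have : (b : G) * x * (b : G)⁻¹ =
        a * ((a : G)⁻¹ * b * x * ((a : G)⁻¹ * b)⁻¹) * (a : G)⁻¹ := by group
    rw [this, mul_left_inj, mul_right_inj, eq_comm, mul_inv_eq_iff_eq_mul]
  let f : K ⧸ (centralizer {x}).subgroupOf K → M :=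
    Quotient.lift comm fun a b hab => (hcomm a b).mpr
      ((QuotientGroup.leftRel_apply (s := (centralizer {x}).subgroupOf K)).mp hab)
  refine Nat.card_le_card_of_injective f ?_
  rintro ⟨a⟩ ⟨b⟩ hab
  exact Quotient.sound (QuotientGroup.leftRel_apply.mpr ((hcomm a b).mp hab))

end Subgroup

namespace IsPGroup

variable {G : Type*} [Group G] [Finite G] {p : ℕ} [Fact p.Prime]

theorem exists_ne_one_mem_center_of_normal (hG : IsPGroup p G) {N : Subgroup G} [N.Normal]
    (hN : N ≠ ⊥) : ∃ z ∈ N, z ≠ 1 ∧ z ∈ center G := by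
  have : Nontrivial N := N.nontrivial_iff_ne_bot.mpr hN
  obtain ⟨n, hn0, hn⟩ := (hG.to_subgroup N).nontrivial_iff_card.mp inferInstance
  obtain ⟨z, hz, hz1⟩ := (hG.of_equiv ConjAct.toConjAct)
    |>.exists_fixed_point_of_prime_dvd_card_of_fixed_point N (hn ▸ dvd_pow_self p hn0.ne') smul_one
  refine ⟨z, z.2, fun h => hz1 (Subtype.ext h.symm), mem_center_iff.mpr fun g => ?_⟩
  have := congrArg Subtype.val (hz (ConjAct.toConjAct g))
  rw [ConjAct.Subgroup.val_conj_smul, ConjAct.toConjAct_smul] at this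
  exact mul_inv_eq_iff_eq_mul.mp this

theorem exists_mk_mem_center_of_lt (hG : IsPGroup p G) {M H : Subgroup G} [M.Normal] [H.Normal]
    (hMH : M < H) : ∃ x ∈ H, x ∉ M ∧ (x : G ⧸ M) ∈ center (G ⧸ M) := by
  have : (H.map (QuotientGroup.mk' M)).Normal := .map ‹_› _ (QuotientGroup.mk'_surjective M)
  have hne : H.map (QuotientGroup.mk' M) ≠ ⊥ := by
    rw [Ne, Subgroup.map_eq_bot_iff, QuotientGroup.ker_mk']
    exact hMH.not_ge
  obtain ⟨z, hzH, hz1, hzc⟩ := (hG.to_quotient M).exists_ne_one_mem_center_of_normal hne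
  obtain ⟨x, hx, rfl⟩ := mem_map.mp hzH
  exact ⟨x, hx, fun hxM => hz1 ((QuotientGroup.eq_one_iff x).mpr hxM), hzc⟩

theorem exists_normal_lt_eq_sup_zpowers (hG : IsPGroup p G) {A : Subgroup G} [A.Normal]
    (hA : A ≠ ⊥) : ∃ (M : Subgroup G) (_ : M.Normal), M < A ∧
      ∃ x : G, (x : G ⧸ M) ∈ center (G ⧸ M) ∧ A = M ⊔ zpowers x := by
  obtain ⟨M, ⟨hMn, hMA⟩, hMmax⟩ := (Set.toFinite {N : Subgroup G | N.Normal ∧ N < A})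
    |>.exists_maximal ⟨⊥, normal_bot, bot_lt_iff_ne_bot.mpr hA⟩
  obtain ⟨x, hxA, hxM, hx⟩ := hG.exists_mk_mem_center_of_lt hMA
  have hB := normal_sup_zpowers_of_mk_mem_center hx
  have hMB : M < M ⊔ zpowers x :=
    lt_of_le_of_ne le_sup_left fun h => hxM (h ▸ mem_sup_right (mem_zpowers x))
  have hBA : M ⊔ zpowers x ≤ A := sup_le hMA.le (zpowers_le.mpr hxA)
  refine ⟨M, hMn, hMA, x, hx, (eq_of_le_of_not_lt hBA fun hlt => ?_).symm⟩
  exact hMB.not_ge (hMmax ⟨hB, hlt⟩ hMB.le)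

theorem index_centralizer_le (hG : IsPGroup p G) {s : ℕ} (A : Subgroup G) [A.Normal]
    (hA : Nat.card A = p ^ s) : (centralizer (A : Set G)).index ≤ p ^ s.choose 2 := by
  have hp : p.Prime := Fact.out
  induction s using Nat.strong_induction_on generalizing A with
  | _ s ih =>
  rcases eq_or_ne A ⊥ with rfl | hA0
  · rw [coe_bot, centralizer_eq_top_iff_subset.mpr (Set.singleton_subset_iff.mpr (one_mem _)),
      index_top]
    exact Nat.one_le_pow _ _ hp.pos
  obtain ⟨M, _, hMA, x, hx, rfl⟩ := hG.exists_normal_lt_eq_sup_zpowers hA0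
  obtain ⟨t, hM⟩ := IsPGroup.iff_card.mp (hG.to_subgroup M)
  have hts : t < s := by
    by_contra! hst
    refine hMA.ne (eq_of_le_of_card_ge hMA.le ?_)
    rw [hA, hM]
    exact Nat.pow_le_pow_right hp.pos hst
  have hxM (g : G) : g * x * g⁻¹ * x⁻¹ ∈ M := by
    rw [← QuotientGroup.eq_one_iff]
    simp [mem_center_iff.mp hx g]
  calc (centralizer ((M ⊔ zpowers x : Subgroup G) : Set G)).index
      = (centralizer {x}).relIndex (centralizer M) * (centralizer (M : Set G)).index := by
        rw [centralizer_sup_zpowers, ← inf_relIndex_right, relIndex_mul_index inf_le_right]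
    _ ≤ p ^ t * p ^ t.choose 2 := Nat.mul_le_mul
        (hM ▸ relIndex_centralizer_singleton_le_card fun g _ => hxM g) (ih t hts M hM)
    _ ≤ p ^ s.choose 2 := by
        rw [← pow_add, Nat.add_choose_two]
        exact Nat.pow_le_pow_right hp.pos (Nat.choose_le_choose 2 hts)

theorem centralizer_eq_of_maximal_isMulCommutative (hG : IsPGroup p G) {A : Subgroup G}
    [A.Normal] [IsMulCommutative A]
    (hmax : ∀ B : Subgroup G, B.Normal → IsMulCommutative B → A ≤ B → B = A) :
    centralizer (A : Set G) = A := by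
  by_contra hne
  have hlt : A < centralizer (A : Set G) := lt_of_le_of_ne (le_centralizer A) (Ne.symm hne)
  obtain ⟨x, hxC, hxA, hx⟩ := hG.exists_mk_mem_center_of_lt hlt
  have hB := normal_sup_zpowers_of_mk_mem_center hx
  have hBc : IsMulCommutative (A ⊔ zpowers x : Subgroup G) := by
    rw [← le_centralizer_iff_isMulCommutative, centralizer_sup_zpowers]
    exact sup_le
      (le_inf (fun a ha => mem_centralizer_singleton_iff.mpr (hxC a ha)) (le_centralizer A))
      (zpowers_le.mpr ⟨mem_centralizer_singleton_iff.mpr rfl, hxC⟩)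
  exact hxA (hmax _ hB hBc le_sup_left ▸ mem_sup_right (mem_zpowers x))

end IsPGroup

theorem abelian_normal_max_bound (p k s : ℕ) (hp : p.Prime)
    (G : Type*) [Group G] [Finite G] (hG : Nat.card G = p ^ k)
    (A : Subgroup G) (hAn : A.Normal) (hAc : IsMulCommutative A)
    (hmax : ∀ B : Subgroup G, B.Normal → IsMulCommutative B → A ≤ B → B = A)
    (hA : Nat.card A = p ^ s) :
    k ≤ s * (s + 1) / 2 := by
  have := Fact.mk hp
  have hGp : IsPGroup p G := IsPGroup.of_card hG
  have hindex := hGp.index_centralizer_le A hA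
  rw [hGp.centralizer_eq_of_maximal_isMulCommutative hmax] at hindex
  have hpow : p ^ k ≤ p ^ (s + s.choose 2) := by
    rw [← hG, ← A.index_mul_card, hA, pow_add, mul_comm]
    exact Nat.mul_le_mul_left _ hindex
  calc k ≤ s + s.choose 2 := (Nat.pow_le_pow_iff_right hp.one_lt).mp hpow
    _ = s * (s + 1) / 2 := by
      rw [Nat.add_choose_two, Nat.choose_two_right, Nat.add_sub_cancel, mul_comm]
end

section
/- If $G$ is a finite $p$-group of order $p^k$ with $|G : \Phi(G)| = p^d$, then $|\mathrm{Aut}(G)|$ divides $p^{d(k-d)} \cdot |\mathrm{GL}_d(\mathbb{F}_p)|$. -/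
/-!
An automorphism of `G` is determined by its values on a generating tuple, so `Aut G` acts
freely on the generating `d`-tuples of `G` and `|Aut G|` divides their number. By the Burnside
basis theorem a tuple generates `G` exactly when its image generates `G / Φ(G)`, and each tuple
of `G / Φ(G)` has `|Φ(G)|^d = p^(d(k-d))` lifts. Every maximal subgroup of a `p`-group is normal
of index `p`, so `G / Φ(G)` is an `𝔽_p`-vector space of dimension `d`; its generating `d`-tuples
are its bases, and there are `|GL_d(𝔽_p)|` of them.
-/

open Subgroup

section PGroup

variable {G : Type*} [Group G]

theorem mem_frattini_iff {x : G} :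
    x ∈ frattini G ↔ ∀ M : Subgroup G, IsCoatom M → x ∈ M := by
  simp [frattini, Order.radical, mem_iInf]

theorem QuotientGroup.isSimpleOrder_of_isCoatom {M : Subgroup G} [M.Normal] (hM : IsCoatom M) :
    IsSimpleOrder (Subgroup (G ⧸ M)) :=
  (OrderIso.isSimpleOrder_iff (β := Set.Ici M) (QuotientGroup.comapMk'OrderIso M)).mpr
    (Set.isSimpleOrder_Ici_iff_isCoatom.mpr hM)

variable {p : ℕ} [Fact p.Prime] [Finite G]

theorem IsPGroup.card_eq_of_isSimpleOrder (hG : IsPGroup p G) [IsSimpleOrder (Subgroup G)] :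
    Nat.card G = p := by
  obtain ⟨n, hn, hcard⟩ := hG.nontrivial_iff_card.mp (Subgroup.nontrivial_iff.mp inferInstance)
  obtain ⟨x, hx⟩ := exists_prime_orderOf_dvd_card' p (hcard ▸ dvd_pow_self p hn.ne')
  have hx1 : x ≠ 1 := by
    rintro rfl
    exact (Fact.out : p.Prime).ne_one (hx ▸ orderOf_one)
  have htop : zpowers x = ⊤ :=
    (IsSimpleOrder.eq_bot_or_eq_top _).resolve_left (zpowers_ne_bot.mpr hx1)
  rw [← hx, ← Nat.card_zpowers, htop, card_top]

theorem IsPGroup.card_quotient_of_isCoatom (hG : IsPGroup p G) {M : Subgroup G} [M.Normal]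
    (hM : IsCoatom M) : Nat.card (G ⧸ M) = p :=
  have := QuotientGroup.isSimpleOrder_of_isCoatom hM
  (hG.to_quotient M).card_eq_of_isSimpleOrder

theorem IsPGroup.mk_frattini_eq_of_forall_isCoatom (hG : IsPGroup p G) {g h : G}
    (H : ∀ (M : Subgroup G) [M.Normal], IsCoatom M → (g : G ⧸ M) = h) :
    (g : G ⧸ frattini G) = h := by
  refine QuotientGroup.eq.mpr (mem_frattini_iff.mpr fun M hM => ?_)
  have := NormalizerCondition.normal_of_coatom M
    (Group.normalizerCondition_of_isNilpotent (h := hG.isNilpotent)) hM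
  exact QuotientGroup.eq.mp (H M hM)

theorem IsPGroup.mul_comm_quotient_frattini (hG : IsPGroup p G) (a b : G ⧸ frattini G) :
    a * b = b * a := by
  obtain ⟨g, rfl⟩ := QuotientGroup.mk_surjective a
  obtain ⟨h, rfl⟩ := QuotientGroup.mk_surjective b
  refine hG.mk_frattini_eq_of_forall_isCoatom fun M _ hM => ?_
  have := isCyclic_of_prime_card (hG.card_quotient_of_isCoatom hM)
  exact mul_comm' (g : G ⧸ M) h

theorem IsPGroup.pow_quotient_frattini (hG : IsPGroup p G) (a : G ⧸ frattini G) : a ^ p = 1 := by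
  obtain ⟨g, rfl⟩ := QuotientGroup.mk_surjective a
  refine hG.mk_frattini_eq_of_forall_isCoatom (h := 1) fun M _ hM => ?_
  rw [QuotientGroup.mk_pow, ← hG.card_quotient_of_isCoatom hM, pow_card_eq_one',
    QuotientGroup.mk_one]

end PGroup

theorem closure_eq_top_iff_closure_image_mk_frattini {G : Type*} [Group G] [Finite G]
    (S : Set G) : closure S = ⊤ ↔ closure (QuotientGroup.mk' (frattini G) '' S) = ⊤ := by
  rw [← MonoidHom.map_closure]
  refine ⟨fun h => ?_, fun h => frattini_nongenerating ?_⟩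
  · rw [h]
    exact map_top_of_surjective _ (QuotientGroup.mk'_surjective _)
  · rw [← QuotientGroup.ker_mk' (frattini G), ← comap_map_eq, h, comap_top]

theorem QuotientGroup.card_mk_comp_mem {ι G : Type*} [Finite ι] [Group G] (N : Subgroup G)
    (S : Set (ι → G ⧸ N)) :
    Nat.card {f : ι → G // (↑) ∘ f ∈ S} = Nat.card S * Nat.card N ^ Nat.card ι := by
  let e : (ι → G) ≃ (ι → G ⧸ N) × (ι → N) :=
    (Equiv.piCongrRight fun _ => groupEquivQuotientProdSubgroup).trans
      (Equiv.arrowProdEquivProdArrow _ _ _)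
  calc Nat.card {f : ι → G // (↑) ∘ f ∈ S}
      _ = Nat.card {x : (ι → G ⧸ N) × (ι → N) // x.1 ∈ S} :=
        Nat.card_congr (e.subtypeEquiv fun _ => Iff.rfl)
      _ = Nat.card S * Nat.card N ^ Nat.card ι := by
        rw [Nat.card_congr Equiv.prodSubtypeFstEquivSubtypeProd, Nat.card_prod, Nat.card_fun]

theorem MulAction.card_dvd_card_of_stabilizer_eq_bot {A X : Type*} [Group A] [MulAction A X]
    (h : ∀ x : X, stabilizer A x = ⊥) : Nat.card A ∣ Nat.card X :=
  ⟨_, (Nat.card_congr (selfEquivOrbitsQuotientProd h)).trans (Nat.card_prod _ _) |>.trans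
    (mul_comm _ _)⟩

theorem AddSubgroup.toZModSubmodule_closure {n : ℕ} {M : Type*} [AddCommGroup M]
    [Module (ZMod n) M] (s : Set M) : toZModSubmodule n (closure s) = Submodule.span (ZMod n) s :=
  le_antisymm
    (show closure s ≤ (Submodule.span (ZMod n) s).toAddSubgroup from
      (closure_le _).mpr Submodule.subset_span)
    (Submodule.span_le.mpr subset_closure)

theorem card_spanning_eq_card_GL {K V : Type*} [Field K] [Fintype K] [AddCommGroup V]
    [Module K V] [Finite V] {d : ℕ} (hV : Nat.card V = Nat.card K ^ d) :
    Nat.card {f : Fin d → V // Submodule.span K (Set.range f) = ⊤} =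
      Nat.card (GL (Fin d) K) := by
  have : FiniteDimensional K V := Module.Finite.of_finite
  obtain rfl : Module.finrank K V = d :=
    Nat.pow_right_injective Finite.one_lt_card ((Module.natCard_eq_pow_finrank).symm.trans hV)
  rw [Matrix.card_GL_field, ← card_linearIndependent le_rfl]
  refine Nat.card_congr (Equiv.subtypeEquivRight fun _ => ⟨fun h => ?_, fun h => ?_⟩)
  · exact linearIndependent_of_top_le_span_of_card_eq_finrank h.ge (Fintype.card_fin _)
  · exact h.span_eq_top_of_card_eq_finrank' (Fintype.card_fin _)

section GeneratingTuples

variable (d : ℕ) (G : Type*) [Group G]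

def generatingTuples : SubMulAction (MulAut G) (Fin d → G) where
  carrier := {f | closure (Set.range f) = ⊤}
  smul_mem' φ f hf := by
    change closure (Set.range (φ.toMonoidHom ∘ f)) = ⊤
    rw [Set.range_comp, ← MonoidHom.map_closure, hf, map_top_of_surjective _ φ.surjective]

variable {d G}

theorem mem_generatingTuples {f : Fin d → G} :
    f ∈ generatingTuples d G ↔ closure (Set.range f) = ⊤ :=
  Iff.rfl

theorem stabilizer_generatingTuples_eq_bot (f : generatingTuples d G) :
    MulAction.stabilizer (MulAut G) f = ⊥ := by
  refine (Subgroup.eq_bot_iff_forall _).mpr fun φ hφ => ?_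
  have hfix : Set.EqOn φ.toMonoidHom (MonoidHom.id G) (Set.range f.1) := by
    rintro _ ⟨i, rfl⟩
    exact congrFun (congrArg Subtype.val hφ) i
  exact MulEquiv.toMonoidHom_injective (MonoidHom.eq_of_eqOn_dense f.2 hfix)

theorem card_mulAut_dvd_card_generatingTuples :
    Nat.card (MulAut G) ∣ Nat.card (generatingTuples d G) :=
  MulAction.card_dvd_card_of_stabilizer_eq_bot stabilizer_generatingTuples_eq_bot

theorem comp_mk_mem_generatingTuples_iff [Finite G] {f : Fin d → G} :
    (↑) ∘ f ∈ generatingTuples d (G ⧸ frattini G) ↔ f ∈ generatingTuples d G := by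
  rw [mem_generatingTuples, mem_generatingTuples,
    closure_eq_top_iff_closure_image_mk_frattini (Set.range f), ← Set.range_comp]
  rfl

theorem card_generatingTuples_eq_mul [Finite G] :
    Nat.card (generatingTuples d G) =
      Nat.card (generatingTuples d (G ⧸ frattini G)) * Nat.card (frattini G) ^ d := by
  calc Nat.card (generatingTuples d G)
      _ = Nat.card {f : Fin d → G //
            (QuotientGroup.mk : G → G ⧸ frattini G) ∘ f ∈
              (generatingTuples d (G ⧸ frattini G) : Set (Fin d → G ⧸ frattini G))} :=
        Nat.card_congr (Equiv.subtypeEquivRight fun _ => comp_mk_mem_generatingTuples_iff.symm)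
      _ = _ := by rw [QuotientGroup.card_mk_comp_mem, Nat.card_fin]; rfl

theorem card_generatingTuples_of_pow_eq_one {p : ℕ} [Fact p.Prime] {V : Type*} [Group V]
    [Finite V] (hcomm : ∀ a b : V, a * b = b * a) (hpow : ∀ a : V, a ^ p = 1)
    (hcard : Nat.card V = p ^ d) :
    Nat.card (generatingTuples d V) = Nat.card (GL (Fin d) (ZMod p)) := by
  let _ : CommGroup V := { mul_comm := hcomm }
  let _ : Module (ZMod p) (Additive V) := AddCommGroup.zmodModule fun x => hpow x.toMul
  rw [← card_spanning_eq_card_GL (K := ZMod p) (V := Additive V) (by rwa [Nat.card_zmod])]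
  refine Nat.card_congr
    (Equiv.subtypeEquiv (Equiv.piCongrRight fun _ => Additive.ofMul) fun f => ?_)
  rw [mem_generatingTuples, ← map_eq_top_iff Subgroup.toAddSubgroup, toAddSubgroup_closure,
    ← map_eq_top_iff (AddSubgroup.toZModSubmodule p), AddSubgroup.toZModSubmodule_closure]
  rfl

end GeneratingTuples

theorem aut_order_divides (p k d : ℕ) (hp : p.Prime)
    (G : Type*) [Group G] [Finite G] (hG : Nat.card G = p ^ k)
    (hd : Nat.card (G ⧸ frattini G) = p ^ d) :
    Nat.card (G ≃* G) ∣ p ^ (d * (k - d)) * Nat.card (GL (Fin d) (ZMod p)) := by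
  have : Fact p.Prime := ⟨hp⟩
  have hPG : IsPGroup p G := IsPGroup.of_card hG
  have hΦ : Nat.card (frattini G) = p ^ (k - d) := by
    have hmul := card_eq_card_quotient_mul_card_subgroup (frattini G)
    rw [hG, hd] at hmul
    have hdk : d ≤ k := (Nat.pow_dvd_pow_iff_le_right hp.one_lt).mp ⟨_, hmul⟩
    rw [← Nat.pow_div hdk hp.pos, hmul, Nat.mul_div_cancel_left _ (pow_pos hp.pos d)]
  have hcount : Nat.card (generatingTuples d G) =
      p ^ (d * (k - d)) * Nat.card (GL (Fin d) (ZMod p)) := by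
    rw [card_generatingTuples_eq_mul, card_generatingTuples_of_pow_eq_one
      hPG.mul_comm_quotient_frattini hPG.pow_quotient_frattini hd, hΦ, ← pow_mul']
    exact mul_comm _ _
  rw [← hcount]
  exact card_mulAut_dvd_card_generatingTuples
end

section
/- Let $G$ be a finite group, let $m$ be the maximal order of an abelian subgroup of $G$, and suppose a prime $p > m/2$ divides $|G|$. Then a Sylow $p$-subgroup $P$ of $G$ has order exactly $p$ and is self-centralising, i.e., $C_G(P) = P$. -/
/-!
Groups of order `p²` are abelian, so `p² ∤ |G|` once every abelian subgroup has order `< 2p ≤ p²`;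
hence `|P| = p` and `P` is abelian. For `x` centralising `P`, the subgroup generated by `P` and `x`
is abelian and contains `P`, so its order is a multiple of `p` below `2p`: it is `P` itself.
-/

namespace Subgroup

variable {G : Type*} [Group G]

theorem eq_of_le_of_card_lt_two_mul {H K : Subgroup G} [Finite K] (hle : H ≤ K)
    (hcard : Nat.card K < 2 * Nat.card H) : H = K := by
  obtain ⟨k, hk⟩ := card_dvd_of_le hle
  have hk_pos : 0 < k := Nat.pos_of_mul_pos_left (hk ▸ Nat.card_pos)
  have hk_lt : k < 2 := Nat.lt_of_mul_lt_mul_left (by rw [← hk]; linarith)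
  exact eq_of_le_of_card_ge hle (by rw [hk, show k = 1 by omega, mul_one])

theorem isMulCommutative_closure_insert_of_mem_centralizer {H : Subgroup G} [IsMulCommutative H]
    {x : G} (hx : x ∈ centralizer (H : Set G)) :
    IsMulCommutative (closure (insert x (H : Set G))) := by
  refine isMulCommutative_closure ?_
  rintro a (rfl | ha) b (rfl | hb)
  · rfl
  · exact (hx b hb).symm
  · exact hx a ha
  · exact setLike_mul_comm ha hb

theorem centralizer_eq_self_of_card_lt_two_mul [Finite G] {H : Subgroup G} [IsMulCommutative H]
    (hcard : ∀ A : Subgroup G, IsMulCommutative A → H ≤ A → Nat.card A < 2 * Nat.card H) :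
    centralizer (H : Set G) = H := by
  refine le_antisymm (fun x hx ↦ ?_) (le_centralizer H)
  have hH : H ≤ closure (insert x (H : Set G)) :=
    fun h hh ↦ subset_closure (Set.mem_insert_of_mem x hh)
  have hA := isMulCommutative_closure_insert_of_mem_centralizer hx
  rw [eq_of_le_of_card_lt_two_mul hH (hcard _ hA hH)]
  exact subset_closure (Set.mem_insert x _)

end Subgroup

section

variable {G : Type*} [Group G] [Finite G] {p : ℕ} [hp : Fact p.Prime]

theorem not_sq_dvd_card_of_forall_isMulCommutative_card_lt
    (hcard : ∀ A : Subgroup G, IsMulCommutative A → Nat.card A < p ^ 2) :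
    ¬ p ^ 2 ∣ Nat.card G := by
  intro hsq
  obtain ⟨K, hK⟩ := Sylow.exists_subgroup_card_pow_prime p hsq
  exact (hcard K (IsPGroup.isMulCommutative_of_card_eq_prime_sq hK)).ne hK

theorem Sylow.card_eq_of_dvd_of_not_sq_dvd (P : Sylow p G) (hdvd : p ∣ Nat.card G)
    (hsq : ¬ p ^ 2 ∣ Nat.card G) : Nat.card P = p := by
  have hG : Nat.card G ≠ 0 := Nat.card_pos.ne'
  have h1 : 1 ≤ (Nat.card G).factorization p := by
    rwa [← hp.out.pow_dvd_iff_le_factorization hG, pow_one]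
  have h2 : ¬ 2 ≤ (Nat.card G).factorization p := by
    rwa [← hp.out.pow_dvd_iff_le_factorization hG]
  rw [P.card_eq_multiplicity, show (Nat.card G).factorization p = 1 by omega, pow_one]

end

theorem sylow_self_centralizing_of_large_prime
    (G : Type*) [Group G] [Finite G] (m p : ℕ) (hp : Fact p.Prime)
    (hm : IsGreatest {n | ∃ A : Subgroup G, IsMulCommutative A ∧ Nat.card A = n} m)
    (hlarge : m < 2 * p) (hdvd : p ∣ Nat.card G) (P : Sylow p G) :
    Nat.card P = p ∧ Subgroup.centralizer ((P : Subgroup G) : Set G) = P := by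
  have hcomm (A : Subgroup G) (hA : IsMulCommutative A) : Nat.card A < 2 * p :=
    (hm.2 ⟨A, hA, rfl⟩).trans_lt hlarge
  have hsq : ¬ p ^ 2 ∣ Nat.card G :=
    not_sq_dvd_card_of_forall_isMulCommutative_card_lt fun A hA ↦
      (hcomm A hA).trans_le (by nlinarith [hp.out.two_le])
  have hcard : Nat.card P = p := P.card_eq_of_dvd_of_not_sq_dvd hdvd hsq
  have : IsCyclic P := isCyclic_of_prime_card hcard
  exact ⟨hcard, Subgroup.centralizer_eq_self_of_card_lt_two_mul fun A hA _ ↦ by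
    rw [hcard]; exact hcomm A hA⟩
end

section
/- Let $G$ be a finite group, $m$ the maximal order of an abelian subgroup of $G$, and suppose a prime $p > m/2$ divides $|G|$. If $N$ is a minimal normal subgroup of $G$ whose order is not divisible by $p$, then $N$ is nilpotent. -/
/-! For a prime `q` dividing `|N|`, let `Q` be a Sylow `q`-subgroup of `N` and `Z = Q ∩ C(Q)` its
centre. The Frattini argument `G = N_G(Q) N` and `p ∤ |N|` give an element `g` of order `p`
normalizing `Q`, hence `Z`. If `g` commuted with some `1 ≠ x ∈ N`, then `⟨g x⟩` would be an abelian
subgroup of order `p · ord x ≥ 2p > m`; so `⟨g⟩` fixes only `1` in `Z` and `|Z| ≡ 1 [MOD p]`.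
Since `1 < |Z| ≤ m < 2p`, this forces `|Z| = p + 1`, a power of `q`. Hence every prime divisor of
`|N|` is the least prime factor of `p + 1`, so `N` is a group of prime-power order. -/

open Subgroup

theorem Nat.eq_add_one_of_modEq_one {n p : ℕ} (hmod : n ≡ 1 [MOD p]) (h1 : 1 < n)
    (h2 : n < 2 * p) : n = p + 1 := by
  obtain ⟨k, hk⟩ := (Nat.modEq_iff_dvd' h1.le).mp hmod.symm
  rcases k with _ | _ | k
  · omega
  · omega
  · have : n = p * k + 2 * p + 1 := by rw [← Nat.sub_add_cancel h1.le, hk]; ring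
    omega

section

variable {G : Type*} [Group G] {p : ℕ}

namespace Subgroup

theorem prime_dvd_card_of_sup_eq_top {H N : Subgroup G} [N.Normal] (hp : p.Prime)
    (hHN : H ⊔ N = ⊤) (hdvd : p ∣ Nat.card G) (hpN : ¬ p ∣ Nat.card N) : p ∣ Nat.card H := by
  have hindex : N.relIndex H = N.index := by rw [← relIndex_sup_right, hHN, relIndex_top_right]
  rw [← N.card_mul_index] at hdvd
  exact ((hp.dvd_mul.mp hdvd).resolve_left hpN).trans (hindex ▸ N.relIndex_dvd_card H)

theorem normalizer_le_normalizer_centralizer [Finite G] (H : Subgroup G) :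
    normalizer H ≤ normalizer (centralizer (H : Set G) : Set G) := by
  intro g hg
  refine mem_normalizer_fintype fun h hh => mem_centralizer_iff.mpr fun x hx => ?_
  have := mem_centralizer_iff.mp hh _ ((mem_normalizer_iff''.mp hg x).mp hx)
  calc x * (g * h * g⁻¹) = g * ((g⁻¹ * x * g) * h) * g⁻¹ := by group
    _ = g * (h * (g⁻¹ * x * g)) * g⁻¹ := by rw [this]
    _ = g * h * g⁻¹ * x := by group

end Subgroup

variable [Finite G]

theorem IsPGroup.card_modEq_card_inf_centralizer [Fact p.Prime] {P A : Subgroup G}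
    (hP : IsPGroup p P) (hPA : P ≤ normalizer A) :
    Nat.card A ≡ Nat.card (A ⊓ centralizer P : Subgroup G) [MOD p] := by
  let _ := MulAction.compHom A (inclusion hPA)
  let e : MulAction.fixedPoints P A ≃ (A ⊓ centralizer P : Subgroup G) :=
    { toFun := fun a => ⟨a.1, a.1.2, fun g hg =>
        (eq_mul_inv_iff_mul_eq.mp (congrArg Subtype.val (a.2 ⟨g, hg⟩)).symm).symm⟩
      invFun := fun a => ⟨⟨a, a.2.1⟩, fun g =>
        Subtype.ext (mul_inv_eq_of_eq_mul (mem_centralizer_iff.mp a.2.2 g g.2))⟩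
      left_inv := fun _ => rfl
      right_inv := fun _ => rfl }
  rw [← Nat.card_congr e]
  exact hP.card_modEq_card_fixedPoints A

theorem IsPGroup.inf_centralizer_ne_bot {q : ℕ} [Fact q.Prime] {Q : Subgroup G}
    (hQ : IsPGroup q Q) (hQ1 : Q ≠ ⊥) : Q ⊓ centralizer Q ≠ ⊥ := by
  have := (nontrivial_iff_ne_bot Q).mpr hQ1
  have := hQ.center_nontrivial
  obtain ⟨z, hz⟩ := exists_ne (1 : center Q)
  refine ne_bot_iff_exists_ne_one.mpr ⟨⟨z, z.1.2, fun x hx => ?_⟩, ?_⟩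
  · exact congrArg Subtype.val (mem_center_iff.mp z.2 ⟨x, hx⟩)
  · exact fun h => hz (Subtype.ext (Subtype.ext (congrArg Subtype.val h :)))

theorem eq_one_of_commute_of_orderOf_eq {m : ℕ} (hp : p.Prime)
    (hab : ∀ A : Subgroup G, IsMulCommutative A → Nat.card A ≤ m) (hlarge : m < 2 * p)
    {g x : G} (hg : orderOf g = p) (hgx : Commute g x) (hx : ¬ p ∣ orderOf x) : x = 1 := by
  have hcop : (orderOf g).Coprime (orderOf x) := hg ▸ hp.coprime_iff_not_dvd.mpr hx
  have hgx_le := hab _ (zpowers_isMulCommutative (g * x))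
  rw [Nat.card_zpowers, hgx.orderOf_mul_eq_mul_orderOf_of_coprime hcop, hg] at hgx_le
  have : orderOf x < 2 := Nat.lt_of_mul_lt_mul_left (hgx_le.trans_lt (by rwa [mul_comm]))
  exact orderOf_eq_one_iff.mp (by have := orderOf_pos x; omega)

theorem card_eq_add_one_of_mem_normalizer {m : ℕ} (hp : p.Prime)
    (hab : ∀ A : Subgroup G, IsMulCommutative A → Nat.card A ≤ m) (hlarge : m < 2 * p)
    {A : Subgroup G} (hAc : IsMulCommutative A) (hA : A ≠ ⊥) (hpA : ¬ p ∣ Nat.card A)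
    {g : G} (hg : orderOf g = p) (hgA : g ∈ normalizer A) : Nat.card A = p + 1 := by
  have := Fact.mk hp
  have hP : IsPGroup p (zpowers g) := .of_card (by rw [Nat.card_zpowers, hg, pow_one])
  have hfix : A ⊓ centralizer (zpowers g) = ⊥ := by
    refine eq_bot_iff.mpr fun x hx => mem_bot.mpr ?_
    refine eq_one_of_commute_of_orderOf_eq hp hab hlarge hg ?_ ?_
    · exact mem_centralizer_iff.mp hx.2 g (mem_zpowers g)
    · exact fun h => hpA (h.trans (A.orderOf_dvd_natCard hx.1))
  have hmod := hP.card_modEq_card_inf_centralizer (zpowers_le.mpr hgA)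
  rw [hfix, card_bot] at hmod
  exact Nat.eq_add_one_of_modEq_one hmod ((one_lt_card_iff_ne_bot A).mpr hA)
    ((hab A hAc).trans_lt hlarge)

theorem eq_minFac_of_prime_dvd_card {m q : ℕ} (hp : p.Prime)
    (hab : ∀ A : Subgroup G, IsMulCommutative A → Nat.card A ≤ m) (hlarge : m < 2 * p)
    (hdvd : p ∣ Nat.card G) {N : Subgroup G} [N.Normal] (hpN : ¬ p ∣ Nat.card N)
    (hq : q.Prime) (hqN : q ∣ Nat.card N) : q = (p + 1).minFac := by
  have := Fact.mk hp
  have := Fact.mk hq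
  obtain ⟨Q⟩ : Nonempty (Sylow q N) := inferInstance
  set Q' := (Q : Subgroup N).map N.subtype
  have hQ' : IsPGroup q Q' := Q.2.map _
  have hQ'ne : Q' ≠ ⊥ :=
    (map_eq_bot_iff_of_injective _ N.subtype_injective).not.mpr (Q.ne_bot_of_dvd_card hqN)
  set A := Q' ⊓ centralizer Q'
  have hAc : IsMulCommutative A := le_centralizer_iff_isMulCommutative.mp
    (inf_le_right.trans (centralizer_le inf_le_left))
  have hAN : A ≤ N := inf_le_left.trans (map_subtype_le _)
  obtain ⟨g, hg⟩ := exists_prime_orderOf_dvd_card' p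
    (prime_dvd_card_of_sup_eq_top hp (Sylow.normalizer_sup_eq_top Q) hdvd hpN)
  have hgA : (g : G) ∈ normalizer A :=
    inf_normalizer_le_normalizer_inf ⟨g.2, normalizer_le_normalizer_centralizer Q' g.2⟩
  have hcard := card_eq_add_one_of_mem_normalizer hp hab hlarge hAc
    (hQ'.inf_centralizer_ne_bot hQ'ne) (fun h => hpN (h.trans (card_dvd_of_le hAN)))
    ((orderOf_coe g).trans hg) hgA
  obtain ⟨b, hb⟩ := IsPGroup.iff_card.mp (hQ'.to_inf_left (K := centralizer Q'))
  rw [hcard] at hb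
  have hb0 : b ≠ 0 := by rintro rfl; rw [pow_zero] at hb; exact hp.ne_zero (by omega)
  rw [hb, hq.pow_minFac hb0]

end

theorem minimal_normal_nilpotent_of_large_prime_general
    (G : Type*) [Group G] [Finite G] (m p : ℕ) (hp : p.Prime)
    (hm : IsGreatest {n | ∃ A : Subgroup G, IsMulCommutative A ∧ Nat.card A = n} m)
    (hlarge : m < 2 * p) (hdvd : p ∣ Nat.card G)
    (N : Subgroup G) (hNn : N.Normal)
    (hpN : ¬ p ∣ Nat.card N) :
    Group.IsNilpotent N := by
  have hab : ∀ A : Subgroup G, IsMulCommutative A → Nat.card A ≤ m :=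
    fun A hA => hm.2 ⟨A, hA, rfl⟩
  have hr : (p + 1).minFac.Prime := Nat.minFac_prime (by have := hp.two_le; omega)
  have := Fact.mk hr
  have hNr : IsPGroup (p + 1).minFac N := by
    refine (isPGroup_iff_primeFactors_card_subset hr.ne_zero).mpr fun q hq => ?_
    rw [hr.primeFactors, Finset.mem_singleton]
    exact eq_minFac_of_prime_dvd_card hp hab hlarge hdvd hpN
      (Nat.prime_of_mem_primeFactors hq) (Nat.dvd_of_mem_primeFactors hq)
  exact hNr.isNilpotent

theorem minimal_normal_nilpotent_of_large_prime
    (G : Type*) [Group G] [Finite G] (m p : ℕ) (hp : p.Prime)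
    (hm : IsGreatest {n | ∃ A : Subgroup G, IsMulCommutative A ∧ Nat.card A = n} m)
    (hlarge : m < 2 * p) (hdvd : p ∣ Nat.card G)
    (N : Subgroup G) (hNn : N.Normal) (hNbot : N ≠ ⊥)
    (hmin : ∀ K : Subgroup G, K.Normal → K ≤ N → K = ⊥ ∨ K = N)
    (hpN : ¬ p ∣ Nat.card N) :
    Group.IsNilpotent N :=
  minimal_normal_nilpotent_of_large_prime_general G m p hp hm hlarge hdvd N hNn hpN
end
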